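/- arXiv:1911.07535 — 5 statements merged into one kernel-verified Lean document; each statement's English description precedes it below -/
import Mathlib

section
/- The nonlinear example system satisfies the convex-combination propagation property (Assumption 3) with the explicit multipliers γ_j = λ_j p_j / Σ_{i=0}^L λ_i p_i: for any t ≥ 0, any finite family of states x_j = (p_j, q_j) ∈ ℝ² with p_j > 0 and inputs u_j ∈ ℝ (j = 0, …, L), and any multipliers λ_j ≥ 0 with Σ_{j=0}^L λ_j = 1, the numbers γ_j = λ_j p_j / (Σ_{i=0}^L λ_i p_i) are well defined, satisfy γ_j ≥ 0 and Σ_{j=0}^L γ_j = 1, and f_t(Σ_{j=0}^L λ_j x_j, Σ_{j=0}^L γ_j u_j) = Σ_{j=0}^L λ_j f_t(x_j, u_j). -/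
open Real

/-- Dynamics of the nonlinear time-varying example system:
`f t (p, q) u = (p + 0.1 q, q + 0.1 p (5 sin(2πt/P) + u))`. -/
noncomputable def fNL (P : ℕ) (t : ℕ) (z : ℝ × ℝ) (v : ℝ) : ℝ × ℝ :=
  (z.1 + 0.1 * z.2, z.2 + 0.1 * z.1 * (5 * Real.sin (2 * π * t / P) + v))

/-!
The input enters only through the bilinear term `0.1 · p · u`, while the rest of `f_t` is linear
in the state. Averaging the inputs with weights proportional to `λ_j p_j` makes
`p̄ · ū = ∑ λ_j p_j u_j` for `p̄ = ∑ λ_j p_j`, so the bilinear term of the averaged state equals the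
average of the bilinear terms; `p̄ > 0` because the `p_j` are positive and some `λ_j` is.
-/

theorem Finset.sum_mul_pos_of_sum_pos {ι R : Type*} [Semiring R] [LinearOrder R]
    [IsStrictOrderedRing R] {s : Finset ι} {w p : ι → R} (hw : ∀ i ∈ s, 0 ≤ w i)
    (hws : 0 < ∑ i ∈ s, w i) (hp : ∀ i ∈ s, 0 < p i) : 0 < ∑ i ∈ s, w i * p i := by
  obtain ⟨i, hi, hwi⟩ := Finset.exists_lt_of_sum_lt (f := fun _ => 0) (g := w)
    (by rwa [Finset.sum_const_zero])
  exact Finset.sum_pos' (fun j hj => mul_nonneg (hw j hj) (hp j hj).le)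
    ⟨i, hi, mul_pos hwi (hp i hi)⟩

theorem Finset.sum_mul_sum_div_mul {ι K : Type*} [Field K] {s : Finset ι} {a : ι → K}
    (u : ι → K) (ha : ∑ i ∈ s, a i ≠ 0) :
    (∑ i ∈ s, a i) * ∑ j ∈ s, a j / (∑ i ∈ s, a i) * u j = ∑ j ∈ s, a j * u j := by
  rw [Finset.mul_sum]
  refine Finset.sum_congr rfl fun j _ => ?_
  rw [div_mul_eq_mul_div, mul_div_cancel₀ _ ha]

noncomputable def fNLDrift (P t : ℕ) : ℝ × ℝ →ₗ[ℝ] ℝ × ℝ :=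
  (LinearMap.fst ℝ ℝ ℝ + (0.1 : ℝ) • LinearMap.snd ℝ ℝ ℝ).prod
    (LinearMap.snd ℝ ℝ ℝ + (0.1 * (5 * Real.sin (2 * π * t / P))) • LinearMap.fst ℝ ℝ ℝ)

theorem fNL_eq_drift_add (P t : ℕ) (z : ℝ × ℝ) (v : ℝ) :
    fNL P t z v = fNLDrift P t z + (0, 0.1 * z.1 * v) := by
  ext
  · simp [fNL, fNLDrift]
  · simp [fNL, fNLDrift]; ring

theorem fNL_sum_smul_of_mul_eq {ι : Type*} (P t : ℕ) (s : Finset ι) (lam : ι → ℝ) (x : ι → ℝ × ℝ)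
    (u : ι → ℝ) (v : ℝ)
    (hv : (∑ j ∈ s, lam j * (x j).1) * v = ∑ j ∈ s, lam j * (x j).1 * u j) :
    fNL P t (∑ j ∈ s, lam j • x j) v = ∑ j ∈ s, lam j • fNL P t (x j) (u j) := by
  have hfst : (∑ j ∈ s, lam j • x j).1 = ∑ j ∈ s, lam j * (x j).1 := by
    simp [Prod.fst_sum]
  simp only [fNL_eq_drift_add, smul_add, Finset.sum_add_distrib, map_sum, map_smul, hfst]
  congr 1
  ext
  · simp [Prod.fst_sum]
  · simp only [Prod.snd_sum, Prod.smul_mk, smul_eq_mul]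
    rw [mul_assoc, hv, Finset.mul_sum]
    exact Finset.sum_congr rfl fun j _ => by ring

theorem nonlinear_example_assumption3_general (P : ℕ) (t : ℕ) (L : ℕ)
    (x : Fin (L + 1) → ℝ × ℝ) (u : Fin (L + 1) → ℝ)
    (hp : ∀ j, 0 < (x j).1)
    (lam : Fin (L + 1) → ℝ) (hlam : ∀ j, 0 ≤ lam j) (hsum : ∑ j, lam j = 1) :
    0 < (∑ i, lam i * (x i).1) ∧
    (∀ j, 0 ≤ lam j * (x j).1 / (∑ i, lam i * (x i).1)) ∧
    (∑ j, lam j * (x j).1 / (∑ i, lam i * (x i).1)) = 1 ∧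
    fNL P t (∑ j, lam j • x j)
        (∑ j, (lam j * (x j).1 / (∑ i, lam i * (x i).1)) * u j)
      = ∑ j, lam j • fNL P t (x j) (u j) := by
  set S := ∑ i, lam i * (x i).1
  have hS : 0 < S :=
    Finset.sum_mul_pos_of_sum_pos (fun j _ => hlam j) (hsum ▸ one_pos) (fun j _ => hp j)
  refine ⟨hS, fun j => div_nonneg (mul_nonneg (hlam j) (hp j).le) hS.le, ?_, ?_⟩
  · rw [← Finset.sum_div, div_self hS.ne']
  · exact fNL_sum_smul_of_mul_eq P t _ lam x u _ (Finset.sum_mul_sum_div_mul u hS.ne')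

/-- **The nonlinear example system satisfies the convex-combination propagation property
(Assumption 3)** with the explicit multipliers `γ_j = λ_j p_j / ∑_i λ_i p_i`:
for any `t ≥ 0`, states `x_j = (p_j, q_j)` with `p_j > 0`, inputs `u_j`, and multipliers
`λ_j ≥ 0` summing to one, the `γ_j` are well defined (positive denominator),
nonnegative, sum to one, and
`f t (∑ λ_j x_j) (∑ γ_j u_j) = ∑ λ_j f t (x_j) (u_j)`. -/
theorem nonlinear_example_assumption3 (P : ℕ) (hP : 1 ≤ P) (t : ℕ) (L : ℕ)
    (x : Fin (L + 1) → ℝ × ℝ) (u : Fin (L + 1) → ℝ)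
    (hp : ∀ j, 0 < (x j).1)
    (lam : Fin (L + 1) → ℝ) (hlam : ∀ j, 0 ≤ lam j) (hsum : ∑ j, lam j = 1) :
    0 < (∑ i, lam i * (x i).1) ∧
    (∀ j, 0 ≤ lam j * (x j).1 / (∑ i, lam i * (x i).1)) ∧
    (∑ j, lam j * (x j).1 / (∑ i, lam i * (x i).1)) = 1 ∧
    fNL P t (∑ j, lam j • x j)
        (∑ j, (lam j * (x j).1 / (∑ i, lam i * (x i).1)) * u j)
      = ∑ j, lam j • fNL P t (x j) (u j) :=
  nonlinear_example_assumption3_general P t L x u hp lam hlam hsum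
end

section
/- Induction step of recursive feasibility (Theorem 1): suppose the realized closed-loop trajectory satisfies x_{k+1} = f_k(x_k, u_k), x_k ∈ X_k, u_k ∈ U_k for all k ≤ t, suppose the system satisfies Assumption 3, and suppose there exists a feasible plan at time t: states x̄_t, …, x̄_{t+N} and inputs ū_t, …, ū_{t+N−1} with x̄_t = x_t, x̄_{k+1} = f_k(x̄_k, ū_k), x̄_k ∈ X_k, ū_k ∈ U_k for k = t, …, t+N−1, and terminal state x̄_{t+N} = Σ_{j=1}^M λ_j x_{t+N−jP} for some multipliers λ_j ≥ 0 with Σ_{j=1}^M λ_j = 1, where M = floor(t/P) ≥ 1. If the applied input is u_t = ū_t (so x_{t+1} = f_t(x_t, ū_t) = x̄_{t+1}), then there exists a feasible plan at time t+1: there exist multipliers γ_j ≥ 0 with Σ_{j=1}^M γ_j = 1 such that the states x̄_{t+1}, …, x̄_{t+N}, Σ_{j=1}^M λ_j x_{t+1+N−jP} and inputs ū_{t+1}, …, ū_{t+N−1}, Σ_{j=1}^M γ_j u_{t+N−jP} satisfy the dynamics, satisfy the state and input constraints at times t+1, …, t+N, and have terminal state Σ_{j=1}^M λ_j x_{t+1+N−jP}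 ∈ CS_{t+1+N}. -/
/-- The sampled safe set at time `s`: the states `x (s - j*P)` of the realized trajectory
for `j = 1, …, M` with `M = ⌊s/P⌋`. -/
def SampledSafeSet {n : ℕ} (P : ℕ) (x : ℕ → Fin n → ℝ) (s : ℕ) : Set (Fin n → ℝ) :=
  {y | ∃ j : ℕ, 1 ≤ j ∧ j ≤ s / P ∧ y = x (s - j * P)}

/-- The convex safe set at time `s`: the convex hull of the sampled safe set. -/
def ConvexSafeSet {n : ℕ} (P : ℕ) (x : ℕ → Fin n → ℝ) (s : ℕ) : Set (Fin n → ℝ) :=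
  convexHull ℝ (SampledSafeSet P x s)

/-!
The shifted plan inherits feasibility from the old one, so only the new terminal step needs an
argument. Each old terminal sample `x (t + N - jP)` was visited at a time `k ≤ t - 1` congruent to
`t + N` (this is where `N < P` enters), so by periodicity the recorded pair `(x k, u k)` is feasible
at time `t + N` and is mapped by `f (t + N)` to the next recorded state `x (k + 1)`. Assumption 3
then turns the convex combination of these pairs into one input that steers the old terminal state
to the same convex combination of the successors, which lies in the convex safe set at `t + 1 + N`.
-/

open Function

section ConvexCombinationReachable

variable {E F : Type*} [AddCommMonoid E] [Module ℝ E] [AddCommMonoid F] [Module ℝ F]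

/-- Assumption 3 at a single time step, for the map `g` from `S × T` to `S'`. -/
def ConvexCombinationReachable (g : E → F → E) (S : Set E) (T : Set F) (S' : Set E) : Prop :=
  ∀ (L : ℕ) (xs : Fin (L + 1) → E) (us : Fin (L + 1) → F),
    (∀ j, xs j ∈ S ∧ us j ∈ T ∧ g (xs j) (us j) ∈ S') →
    ∀ lam : Fin (L + 1) → ℝ, (∀ j, 0 ≤ lam j) → (∑ j, lam j = 1) →
      ∃ gam : Fin (L + 1) → ℝ, (∀ j, 0 ≤ gam j) ∧ (∑ j, gam j = 1) ∧
        g (∑ j, lam j • xs j) (∑ j, gam j • us j) = ∑ j, lam j • g (xs j) (us j)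

theorem ConvexCombinationReachable.exists_weights {g : E → F → E} {S : Set E} {T : Set F}
    {S' : Set E} (hg : ConvexCombinationReachable g S T S') {m : ℕ} (xs : Fin m → E)
    (us : Fin m → F) (hfeas : ∀ j, xs j ∈ S ∧ us j ∈ T ∧ g (xs j) (us j) ∈ S')
    (lam : Fin m → ℝ) (hlam : ∀ j, 0 ≤ lam j) (hlamsum : ∑ j, lam j = 1) :
    ∃ gam : Fin m → ℝ, (∀ j, 0 ≤ gam j) ∧ (∑ j, gam j = 1) ∧
      g (∑ j, lam j • xs j) (∑ j, gam j • us j) = ∑ j, lam j • g (xs j) (us j) := by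
  obtain ⟨L, rfl⟩ : ∃ L, m = L + 1 := Nat.exists_eq_succ_of_ne_zero <| by
    rintro rfl
    simp at hlamsum
  exact hg L xs us hfeas lam hlam hlamsum

end ConvexCombinationReachable

section PeriodicTrajectory

variable {n d : ℕ} {P : ℕ} {f : ℕ → (Fin n → ℝ) → (Fin d → ℝ) → (Fin n → ℝ)}
  {X : ℕ → Set (Fin n → ℝ)} {U : ℕ → Set (Fin d → ℝ)} {x : ℕ → Fin n → ℝ} {u : ℕ → Fin d → ℝ}
  {t : ℕ}

theorem feasible_at_periodic_shift (hf : Periodic f P) (hX : Periodic X P) (hU : Periodic U P)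
    (hhist : ∀ k, k ≤ t → x (k + 1) = f k (x k) (u k) ∧ x k ∈ X k ∧ u k ∈ U k)
    {k : ℕ} (hk : k + 1 ≤ t) (m : ℕ) :
    x k ∈ X (k + m * P) ∧ u k ∈ U (k + m * P) ∧ f (k + m * P) (x k) (u k) = x (k + 1) ∧
      x (k + 1) ∈ X (k + m * P + 1) := by
  have hXk : X (k + m * P) = X k := by simpa using hX.nat_mul m k
  have hXk1 : X (k + m * P + 1) = X (k + 1) := by
    simpa [add_right_comm] using hX.nat_mul m (k + 1)
  have hUk : U (k + m * P) = U k := by simpa using hU.nat_mul m k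
  have hfk : f (k + m * P) = f k := by simpa using hf.nat_mul m k
  obtain ⟨hstep, hxk, huk⟩ := hhist k (by omega)
  rw [hXk, hXk1, hUk, hfk]
  exact ⟨hxk, huk, hstep.symm, (hhist (k + 1) hk).2.1⟩

theorem terminal_sample_feasible (hf : Periodic f P) (hX : Periodic X P) (hU : Periodic U P)
    (hhist : ∀ k, k ≤ t → x (k + 1) = f k (x k) (u k) ∧ x k ∈ X k ∧ u k ∈ U k)
    {N : ℕ} (hNP : N < P) {j : ℕ} (hj : j < t / P) :
    x (t + N - (j + 1) * P) ∈ X (t + N) ∧ u (t + N - (j + 1) * P) ∈ U (t + N) ∧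
      f (t + N) (x (t + N - (j + 1) * P)) (u (t + N - (j + 1) * P))
        = x (t + 1 + N - (j + 1) * P) ∧
      x (t + 1 + N - (j + 1) * P) ∈ X (t + N + 1) := by
  have hjP : (j + 1) * P ≤ t := (Nat.mul_le_mul_right P hj).trans (Nat.div_mul_le_self t P)
  have hPj : P ≤ (j + 1) * P := Nat.le_mul_of_pos_left P j.succ_pos
  have hshift := feasible_at_periodic_shift hf hX hU hhist
    (k := t + N - (j + 1) * P) (by omega) (j + 1)
  rwa [Nat.sub_add_cancel (by omega), show t + N - (j + 1) * P + 1 = t + 1 + N - (j + 1) * P by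
    omega] at hshift

end PeriodicTrajectory

theorem sum_smul_mem_convexSafeSet {n : ℕ} (P : ℕ) (x : ℕ → Fin n → ℝ) {s m : ℕ}
    (hm : m ≤ s / P) (lam : Fin m → ℝ) (hlam : ∀ j, 0 ≤ lam j) (hlamsum : ∑ j, lam j = 1) :
    ∑ j : Fin m, lam j • x (s - (j.1 + 1) * P) ∈ ConvexSafeSet P x s :=
  (convex_convexHull ℝ _).sum_mem (fun j _ => hlam j) hlamsum fun j _ =>
    subset_convexHull ℝ _ ⟨j.1 + 1, by omega, by omega, rfl⟩

theorem recursive_feasibility_induction_step_general {n d : ℕ} (P N : ℕ)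
    (hN : 1 ≤ N) (hNP : N < P)
    (f : ℕ → (Fin n → ℝ) → (Fin d → ℝ) → (Fin n → ℝ))
    (X : ℕ → Set (Fin n → ℝ)) (U : ℕ → Set (Fin d → ℝ))
    (hf : ∀ t, f (t + P) = f t)
    (hX : ∀ t, Convex ℝ (X t)) (hXper : ∀ t, X (t + P) = X t)
    (hU : ∀ t, Convex ℝ (U t)) (hUper : ∀ t, U (t + P) = U t)
    -- Assumption 3:
    (hA3 : ∀ (t' L : ℕ) (xs : Fin (L + 1) → Fin n → ℝ) (us : Fin (L + 1) → Fin d → ℝ),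
      (∀ j, xs j ∈ X t' ∧ us j ∈ U t' ∧ f t' (xs j) (us j) ∈ X (t' + 1)) →
      ∀ lam : Fin (L + 1) → ℝ, (∀ j, 0 ≤ lam j) → (∑ j, lam j = 1) →
        ∃ gam : Fin (L + 1) → ℝ, (∀ j, 0 ≤ gam j) ∧ (∑ j, gam j = 1) ∧
          f t' (∑ j, lam j • xs j) (∑ j, gam j • us j) = ∑ j, lam j • f t' (xs j) (us j))
    -- realized closed-loop trajectory, feasible up to time `t`:
    (x : ℕ → Fin n → ℝ) (u : ℕ → Fin d → ℝ) (t : ℕ)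
    (hhist : ∀ k, k ≤ t → x (k + 1) = f k (x k) (u k) ∧ x k ∈ X k ∧ u k ∈ U k)
    -- a feasible plan at time `t`, with `M = ⌊t/P⌋ ≥ 1`:
    (xbar : ℕ → Fin n → ℝ) (ubar : ℕ → Fin d → ℝ) (lam : Fin (t / P) → ℝ)
    (hlam : ∀ j, 0 ≤ lam j) (hlamsum : ∑ j, lam j = 1)
    (hinit : xbar t = x t)
    (hpdyn : ∀ k, t ≤ k → k < t + N → xbar (k + 1) = f k (xbar k) (ubar k))
    (hpcon : ∀ k, t ≤ k → k < t + N → xbar k ∈ X k ∧ ubar k ∈ U k)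
    (hterm : xbar (t + N) = ∑ j : Fin (t / P), lam j • x (t + N - (j.1 + 1) * P))
    -- the applied input is the first input of the plan:
    (happl : u t = ubar t) :
    ∃ gam : Fin (t / P) → ℝ, (∀ j, 0 ≤ gam j) ∧ (∑ j, gam j = 1) ∧
      -- the shifted/extended plan is feasible at time `t + 1`:
      (xbar (t + 1) = x (t + 1)) ∧
      (∀ k, t + 1 ≤ k → k < t + N → xbar (k + 1) = f k (xbar k) (ubar k)) ∧
      (f (t + N) (xbar (t + N)) (∑ j : Fin (t / P), gam j • u (t + N - (j.1 + 1) * P))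
        = ∑ j : Fin (t / P), lam j • x (t + 1 + N - (j.1 + 1) * P)) ∧
      (∀ k, t + 1 ≤ k → k < t + N → xbar k ∈ X k ∧ ubar k ∈ U k) ∧
      xbar (t + N) ∈ X (t + N) ∧
      (∑ j : Fin (t / P), gam j • u (t + N - (j.1 + 1) * P)) ∈ U (t + N) ∧
      (∑ j : Fin (t / P), lam j • x (t + 1 + N - (j.1 + 1) * P))
        ∈ ConvexSafeSet P x (t + 1 + N) := by
  have hsample (j : Fin (t / P)) := terminal_sample_feasible hf hXper hUper hhist hNP j.2
  have hA3' : ConvexCombinationReachable (f (t + N)) (X (t + N)) (U (t + N)) (X (t + N + 1)) :=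
    hA3 (t + N)
  obtain ⟨gam, hgam, hgamsum, hgameq⟩ := hA3'.exists_weights
    (fun j => x (t + N - (j.1 + 1) * P)) (fun j => u (t + N - (j.1 + 1) * P))
    (fun j => ⟨(hsample j).1, (hsample j).2.1, (hsample j).2.2.1 ▸ (hsample j).2.2.2⟩)
    lam hlam hlamsum
  refine ⟨gam, hgam, hgamsum, ?_, fun k hk hk' => hpdyn k (by omega) hk', ?_,
    fun k hk hk' => hpcon k (by omega) hk', ?_, ?_, ?_⟩
  · rw [hpdyn t le_rfl (by omega), hinit, ← happl, (hhist t le_rfl).1]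
  · rw [hterm, hgameq]
    exact Finset.sum_congr rfl fun j _ => by rw [(hsample j).2.2.1]
  · rw [hterm]
    exact (hX _).sum_mem (fun j _ => hlam j) hlamsum fun j _ => (hsample j).1
  · exact (hU _).sum_mem (fun j _ => hgam j) hgamsum fun j _ => (hsample j).2.1
  · exact sum_smul_mem_convexSafeSet P x (Nat.div_le_div_right (by omega)) lam hlam hlamsum

/-- **Induction step of recursive feasibility (Theorem 1).**
If the realized closed-loop trajectory is feasible up to time `t`, Assumption 3 holds,
and there is a feasible plan at time `t` whose first input is applied to the system,
then there is a feasible plan at time `t + 1`, obtained by shifting the previous plan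
and appending the terminal state `∑_j λ_j x (t+1+N-jP)` reached with the input
`∑_j γ_j u (t+N-jP)` given by Assumption 3. -/
theorem recursive_feasibility_induction_step {n d : ℕ} (P N : ℕ)
    (hN : 1 ≤ N) (hNP : N < P)
    (f : ℕ → (Fin n → ℝ) → (Fin d → ℝ) → (Fin n → ℝ))
    (X : ℕ → Set (Fin n → ℝ)) (U : ℕ → Set (Fin d → ℝ))
    (hf : ∀ t, f (t + P) = f t)
    (hX : ∀ t, Convex ℝ (X t)) (hXper : ∀ t, X (t + P) = X t)
    (hU : ∀ t, Convex ℝ (U t)) (hUper : ∀ t, U (t + P) = U t)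
    -- Assumption 3:
    (hA3 : ∀ (t' L : ℕ) (xs : Fin (L + 1) → Fin n → ℝ) (us : Fin (L + 1) → Fin d → ℝ),
      (∀ j, xs j ∈ X t' ∧ us j ∈ U t' ∧ f t' (xs j) (us j) ∈ X (t' + 1)) →
      ∀ lam : Fin (L + 1) → ℝ, (∀ j, 0 ≤ lam j) → (∑ j, lam j = 1) →
        ∃ gam : Fin (L + 1) → ℝ, (∀ j, 0 ≤ gam j) ∧ (∑ j, gam j = 1) ∧
          f t' (∑ j, lam j • xs j) (∑ j, gam j • us j) = ∑ j, lam j • f t' (xs j) (us j))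
    -- realized closed-loop trajectory, feasible up to time `t`:
    (x : ℕ → Fin n → ℝ) (u : ℕ → Fin d → ℝ) (t : ℕ)
    (hhist : ∀ k, k ≤ t → x (k + 1) = f k (x k) (u k) ∧ x k ∈ X k ∧ u k ∈ U k)
    (hxcon : ∀ k, k ≤ t + 1 → x k ∈ X k)
    -- a feasible plan at time `t`, with `M = ⌊t/P⌋ ≥ 1`:
    (hM : 1 ≤ t / P)
    (xbar : ℕ → Fin n → ℝ) (ubar : ℕ → Fin d → ℝ) (lam : Fin (t / P) → ℝ)
    (hlam : ∀ j, 0 ≤ lam j) (hlamsum : ∑ j, lam j = 1)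
    (hinit : xbar t = x t)
    (hpdyn : ∀ k, t ≤ k → k < t + N → xbar (k + 1) = f k (xbar k) (ubar k))
    (hpcon : ∀ k, t ≤ k → k < t + N → xbar k ∈ X k ∧ ubar k ∈ U k)
    (hterm : xbar (t + N) = ∑ j : Fin (t / P), lam j • x (t + N - (j.1 + 1) * P))
    -- the applied input is the first input of the plan:
    (happl : u t = ubar t) (hcl : x (t + 1) = f t (x t) (u t)) :
    ∃ gam : Fin (t / P) → ℝ, (∀ j, 0 ≤ gam j) ∧ (∑ j, gam j = 1) ∧
      -- the shifted/extended plan is feasible at time `t + 1`: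
      (xbar (t + 1) = x (t + 1)) ∧
      (∀ k, t + 1 ≤ k → k < t + N → xbar (k + 1) = f k (xbar k) (ubar k)) ∧
      (f (t + N) (xbar (t + N)) (∑ j : Fin (t / P), gam j • u (t + N - (j.1 + 1) * P))
        = ∑ j : Fin (t / P), lam j • x (t + 1 + N - (j.1 + 1) * P)) ∧
      (∀ k, t + 1 ≤ k → k < t + N → xbar k ∈ X k ∧ ubar k ∈ U k) ∧
      xbar (t + N) ∈ X (t + N) ∧
      (∑ j : Fin (t / P), gam j • u (t + N - (j.1 + 1) * P)) ∈ U (t + N) ∧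
      (∑ j : Fin (t / P), lam j • x (t + 1 + N - (j.1 + 1) * P))
        ∈ ConvexSafeSet P x (t + 1 + N) :=
  recursive_feasibility_induction_step_general P N hN hNP f X U hf hX hXper hU hUper hA3 x u t hhist
    xbar ubar lam hlam hlamsum hinit hpdyn hpcon hterm happl
end

section
/- Recursive feasibility (Theorem 1): suppose a feasible P-periodic initial trajectory x_0, …, x_P with inputs u_0, …, u_{P−1} is given (x_{k+1} = f_k(x_k, u_k), x_k ∈ X_k, u_k ∈ U_k, x_P = x_0), Assumption 3 holds, and for every t ≥ P the closed loop is defined by choosing any feasible plan at time t and applying its first input u_t = ū_t, setting x_{t+1} = f_t(x_t, u_t). Then for every t ≥ P a feasible plan at time t exists (i.e., the LMPC finite-time optimal control problem is feasible for all t ≥ P), and consequently the closed-loop trajectory satisfies x_t ∈ X_t and u_t ∈ U_t for all t ≥ 0. -/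
/-!
The plan found at time `s` is shifted by one step. Its terminal state is a convex combination
`∑ λ_j x_{s+N-jP}` of states of earlier periods, each of which was steered by `u_{s+N-jP}` to
the admissible state `x_{s+N+1-jP}`; by periodicity these transitions are feasible at time
`s + N`, so Assumption 3 yields a convex combination of those inputs, admissible by convexity of
`U`, that steers the terminal state to `∑ λ_j x_{s+N+1-jP}`, a point of the convex safe set at
time `s + 1`. Closed-loop constraint satisfaction is read off from the first step of each plan,
and at `t = P` the initial period itself is a feasible plan.
-/

/-- A plan at time `t` (states `xb`, inputs `ub`, multipliers `lam` indexed by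
`j : Fin (t/P)`, representing `λ_{j+1}`) is feasible for the LMPC problem if it starts
at the current state `x t`, satisfies the dynamics and the state and input constraints
over the horizon, and its terminal state is the convex combination
`∑_j λ_j x (t+N-jP)` of the sampled safe set. -/
def FeasPlan {n d : ℕ} (P N : ℕ)
    (f : ℕ → (Fin n → ℝ) → (Fin d → ℝ) → (Fin n → ℝ))
    (X : ℕ → Set (Fin n → ℝ)) (U : ℕ → Set (Fin d → ℝ))
    (x : ℕ → Fin n → ℝ) (t : ℕ)
    (xb : ℕ → Fin n → ℝ) (ub : ℕ → Fin d → ℝ) (lam : Fin (t / P) → ℝ) : Prop :=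
  (∀ j, 0 ≤ lam j) ∧ (∑ j, lam j = 1) ∧
  xb t = x t ∧
  (∀ k, t ≤ k → k < t + N → xb (k + 1) = f k (xb k) (ub k)) ∧
  (∀ k, t ≤ k → k < t + N → xb k ∈ X k ∧ ub k ∈ U k) ∧
  xb (t + N) = ∑ j : Fin (t / P), lam j • x (t + N - (j.1 + 1) * P)

open Function

/-- Assumption 3. -/
def ConvexTransitions {E F : Type*} [AddCommMonoid E] [Module ℝ E] [AddCommMonoid F]
    [Module ℝ F] (f : ℕ → E → F → E) (X : ℕ → Set E) (U : ℕ → Set F) : Prop :=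
  ∀ (t L : ℕ) (xs : Fin (L + 1) → E) (us : Fin (L + 1) → F),
    (∀ j, xs j ∈ X t ∧ us j ∈ U t ∧ f t (xs j) (us j) ∈ X (t + 1)) →
    ∀ lam : Fin (L + 1) → ℝ, (∀ j, 0 ≤ lam j) → (∑ j, lam j = 1) →
      ∃ gam : Fin (L + 1) → ℝ, (∀ j, 0 ≤ gam j) ∧ (∑ j, gam j = 1) ∧
        f t (∑ j, lam j • xs j) (∑ j, gam j • us j) = ∑ j, lam j • f t (xs j) (us j)

theorem ConvexTransitions.exists_input {E F : Type*} [AddCommMonoid E] [Module ℝ E]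
    [AddCommGroup F] [Module ℝ F] {f : ℕ → E → F → E} {X : ℕ → Set E} {U : ℕ → Set F}
    (hA : ConvexTransitions f X U) {t M : ℕ} (hU : Convex ℝ (U t)) {xs : Fin M → E}
    {us : Fin M → F} (hmem : ∀ j, xs j ∈ X t ∧ us j ∈ U t ∧ f t (xs j) (us j) ∈ X (t + 1))
    {lam : Fin M → ℝ} (h0 : ∀ j, 0 ≤ lam j) (h1 : ∑ j, lam j = 1) :
    ∃ w ∈ U t, f t (∑ j, lam j • xs j) w = ∑ j, lam j • f t (xs j) (us j) := by
  cases M with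
  | zero => simp at h1
  | succ L =>
    obtain ⟨gam, hg0, hg1, hgam⟩ := hA t L xs us hmem lam h0 h1
    exact ⟨_, hU.sum_mem (fun j _ => hg0 j) hg1 (fun j _ => (hmem j).2.1), hgam⟩

theorem Function.Periodic.apply_add_nat_mul {α : Type*} {g : ℕ → α} {c : ℕ} (hg : Periodic g c)
    (i m : ℕ) : g (i + m * c) = g i := by
  simpa using hg.nat_mul m i

def Fin.zeroExtend {α : Type*} [Zero α] {M : ℕ} (M' : ℕ) (a : Fin M → α) : Fin M' → α :=
  fun j => if h : (j : ℕ) < M then a ⟨j, h⟩ else 0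

theorem Fin.sum_zeroExtend_smul {R E : Type*} [Semiring R] [AddCommMonoid E] [Module R E]
    {M M' : ℕ} (h : M ≤ M') (a : Fin M → R) (g : ℕ → E) :
    ∑ j : Fin M', Fin.zeroExtend M' a j • g j = ∑ j : Fin M, a j • g j := by
  refine (Fintype.sum_of_injective (Fin.castLE h) (Fin.castLE_injective h) _ _ ?_ ?_).symm
  · intro j hj
    have hjM : ¬ (j : ℕ) < M := fun hlt => hj ⟨⟨j, hlt⟩, rfl⟩
    simp [Fin.zeroExtend, hjM]
  · intro j
    simp [Fin.zeroExtend]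

theorem Fin.sum_zeroExtend {R : Type*} [Semiring R] {M M' : ℕ} (h : M ≤ M') (a : Fin M → R) :
    ∑ j : Fin M', Fin.zeroExtend M' a j = ∑ j : Fin M, a j := by
  simpa using Fin.sum_zeroExtend_smul h a (fun _ => (1 : R))

theorem Fin.zeroExtend_nonneg {α : Type*} [Preorder α] [Zero α] {M M' : ℕ} {a : Fin M → α}
    (h : ∀ j, 0 ≤ a j) (j : Fin M') :
    0 ≤ Fin.zeroExtend M' a j := by
  unfold Fin.zeroExtend
  split_ifs
  exacts [h _, le_rfl]

section FeasPlan

variable {n d P N : ℕ} {f : ℕ → (Fin n → ℝ) → (Fin d → ℝ) → (Fin n → ℝ)}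
  {X : ℕ → Set (Fin n → ℝ)} {U : ℕ → Set (Fin d → ℝ)} {x : ℕ → Fin n → ℝ} {u : ℕ → Fin d → ℝ}

theorem FeasPlan.mem_of_input_eq {t : ℕ} {xb : ℕ → Fin n → ℝ} {ub : ℕ → Fin d → ℝ}
    {lam : Fin (t / P) → ℝ} (hN : 0 < N) (hp : FeasPlan P N f X U x t xb ub lam)
    (hu : u t = ub t) : x t ∈ X t ∧ u t ∈ U t := by
  obtain ⟨-, -, hinit, -, hcon, -⟩ := hp
  rw [← hinit, hu]
  exact hcon t le_rfl (by omega)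

theorem feasPlan_initial (hNP : N < P) (hf : Periodic f P) (hXper : Periodic X P)
    (hUper : Periodic U P) (hdyn : ∀ k < P, x (k + 1) = f k (x k) (u k))
    (hxcon : ∀ k ≤ P, x k ∈ X k) (hucon : ∀ k < P, u k ∈ U k) (hper : x P = x 0) :
    FeasPlan P N f X U x P (fun k => x (k - P)) (fun k => u (k - P)) (fun _ => 1) := by
  have hP : P / P = 1 := Nat.div_self (by omega)
  refine ⟨fun _ => zero_le_one, by simp [hP], by simp [hper], ?_, ?_, ?_⟩
  · intro k hk hkN
    obtain ⟨i, rfl⟩ : ∃ i, k = i + P := ⟨k - P, by omega⟩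
    show x (i + P + 1 - P) = f (i + P) (x (i + P - P)) (u (i + P - P))
    rw [hf i, Nat.add_sub_cancel, Nat.add_right_comm, Nat.add_sub_cancel]
    exact hdyn i (by omega)
  · intro k hk hkN
    obtain ⟨i, rfl⟩ : ∃ i, k = i + P := ⟨k - P, by omega⟩
    show x (i + P - P) ∈ X (i + P) ∧ u (i + P - P) ∈ U (i + P)
    rw [hXper i, hUper i, Nat.add_sub_cancel]
    exact ⟨hxcon i (by omega), hucon i (by omega)⟩
  · have hj (j : Fin (P / P)) : (j : ℕ) = 0 := by have := j.2; omega
    simp [hj, hP]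

theorem FeasPlan.extend {s : ℕ} {xb : ℕ → Fin n → ℝ} {ub : ℕ → Fin d → ℝ}
    {lam : Fin (s / P) → ℝ} {w : Fin d → ℝ} (hN : 0 < N) (hp : FeasPlan P N f X U x s xb ub lam)
    (hcl : x (s + 1) = f s (x s) (ub s)) (hxN : xb (s + N) ∈ X (s + N)) (hw : w ∈ U (s + N))
    (hterm : f (s + N) (xb (s + N)) w = ∑ j : Fin (s / P), lam j • x (s + 1 + N - (j + 1) * P)) :
    FeasPlan P N f X U x (s + 1) (update xb (s + 1 + N) (f (s + N) (xb (s + N)) w))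
      (update ub (s + N) w) (Fin.zeroExtend _ lam) := by
  obtain ⟨hl0, hl1, hinit, hdyn, hcon, -⟩ := hp
  have hM : s / P ≤ (s + 1) / P := Nat.div_le_div_right (Nat.le_succ s)
  refine ⟨Fin.zeroExtend_nonneg hl0, (Fin.sum_zeroExtend hM lam).trans hl1, ?_, ?_, ?_, ?_⟩
  · rw [update_of_ne (by omega), hdyn s le_rfl (by omega), hinit, hcl]
  · intro k hk hkN
    rcases (show k = s + N ∨ k < s + N by omega) with rfl | hlt
    · rw [show s + N + 1 = s + 1 + N by omega, update_self, update_self,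
        update_of_ne (by omega)]
    · rw [update_of_ne (by omega), update_of_ne (by omega), update_of_ne (by omega)]
      exact hdyn k (by omega) hlt
  · intro k hk hkN
    rcases (show k = s + N ∨ k < s + N by omega) with rfl | hlt
    · rw [update_of_ne (by omega), update_self]
      exact ⟨hxN, hw⟩
    · rw [update_of_ne (by omega), update_of_ne (by omega)]
      exact hcon k (by omega) hlt
  · rw [update_self, hterm]
    exact (Fin.sum_zeroExtend_smul hM lam (fun i => x (s + 1 + N - (i + 1) * P))).symm

theorem transition_mem_of_periodic (hf : Periodic f P) (hXper : Periodic X P)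
    (hUper : Periodic U P) {i : ℕ} (hi : x i ∈ X i ∧ u i ∈ U i) (hi1 : x (i + 1) ∈ X (i + 1))
    (hdyn : x (i + 1) = f i (x i) (u i)) (m : ℕ) :
    x i ∈ X (i + m * P) ∧ u i ∈ U (i + m * P) ∧ f (i + m * P) (x i) (u i) = x (i + 1) ∧
      x (i + 1) ∈ X (i + m * P + 1) := by
  rw [hXper.apply_add_nat_mul, hUper.apply_add_nat_mul, hf.apply_add_nat_mul,
    Nat.add_right_comm, hXper.apply_add_nat_mul]
  exact ⟨hi.1, hi.2, hdyn.symm, hi1⟩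

theorem FeasPlan.exists_succ {s : ℕ} {xb : ℕ → Fin n → ℝ} {ub : ℕ → Fin d → ℝ}
    {lam : Fin (s / P) → ℝ} (hN : 0 < N) (hNP : N < P) (hf : Periodic f P)
    (hXper : Periodic X P) (hUper : Periodic U P) (hX : Convex ℝ (X (s + N)))
    (hU : Convex ℝ (U (s + N))) (hA : ConvexTransitions f X U)
    (hdyn : ∀ k ≤ s, x (k + 1) = f k (x k) (u k)) (hhist : ∀ k ≤ s, x k ∈ X k ∧ u k ∈ U k)
    (hp : FeasPlan P N f X U x s xb ub lam) (hus : u s = ub s) :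
    ∃ xb' ub' lam', FeasPlan P N f X U x (s + 1) xb' ub' lam' := by
  have ⟨hl0, hl1, _, _, _, hterm⟩ := hp
  have hsafe (j : Fin (s / P)) :
      x (s + N - (j + 1) * P) ∈ X (s + N) ∧ u (s + N - (j + 1) * P) ∈ U (s + N) ∧
      f (s + N) (x (s + N - (j + 1) * P)) (u (s + N - (j + 1) * P)) =
        x (s + 1 + N - (j + 1) * P) ∧ x (s + 1 + N - (j + 1) * P) ∈ X (s + N + 1) := by
    have hj : ((j : ℕ) + 1) * P ≤ s :=
      (Nat.mul_le_mul_right P j.2).trans (Nat.div_mul_le_self s P)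
    have hjP : P ≤ ((j : ℕ) + 1) * P := Nat.le_mul_of_pos_left P j.succ_pos
    obtain ⟨i, hi⟩ : ∃ i, s + N = i + (j + 1) * P := ⟨s + N - (j + 1) * P, by omega⟩
    rw [show s + 1 + N - (j + 1) * P = i + 1 by omega, hi, Nat.add_sub_cancel]
    exact transition_mem_of_periodic hf hXper hUper (hhist i (by omega))
      (hhist (i + 1) (by omega)).1 (hdyn i (by omega)) _
  obtain ⟨w, hwU, hw⟩ := hA.exists_input hU
    (fun j => ⟨(hsafe j).1, (hsafe j).2.1, (hsafe j).2.2.1 ▸ (hsafe j).2.2.2⟩) hl0 hl1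
  have hxN : xb (s + N) ∈ X (s + N) :=
    hterm ▸ hX.sum_mem (fun j _ => hl0 j) hl1 (fun j _ => (hsafe j).1)
  refine ⟨_, _, _, FeasPlan.extend hN hp (hus ▸ hdyn s le_rfl) hxN hwU ?_⟩
  rw [hterm, hw]
  exact Finset.sum_congr rfl fun j _ => by rw [(hsafe j).2.2.1]

end FeasPlan

/-- **Recursive feasibility (Theorem 1).**  Suppose a feasible `P`-periodic initial
trajectory is given, Assumption 3 holds, and for every `t ≥ P` the closed loop applies
the first input of some feasible plan at time `t` (whenever a feasible plan exists).
Then for every `t ≥ P` a feasible plan at time `t` exists, i.e. the LMPC problem is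
feasible for all `t ≥ P`, and consequently the closed-loop trajectory satisfies the
state and input constraints for all `t ≥ 0`. -/
theorem recursive_feasibility {n d : ℕ} (P N : ℕ) (hN : 1 ≤ N) (hNP : N < P)
    (f : ℕ → (Fin n → ℝ) → (Fin d → ℝ) → (Fin n → ℝ))
    (X : ℕ → Set (Fin n → ℝ)) (U : ℕ → Set (Fin d → ℝ))
    (hf : ∀ t, f (t + P) = f t)
    (hX : ∀ t, Convex ℝ (X t)) (hXper : ∀ t, X (t + P) = X t)
    (hU : ∀ t, Convex ℝ (U t)) (hUper : ∀ t, U (t + P) = U t)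
    -- Assumption 3:
    (hA3 : ∀ (t' L : ℕ) (xs : Fin (L + 1) → Fin n → ℝ) (us : Fin (L + 1) → Fin d → ℝ),
      (∀ j, xs j ∈ X t' ∧ us j ∈ U t' ∧ f t' (xs j) (us j) ∈ X (t' + 1)) →
      ∀ lam : Fin (L + 1) → ℝ, (∀ j, 0 ≤ lam j) → (∑ j, lam j = 1) →
        ∃ gam : Fin (L + 1) → ℝ, (∀ j, 0 ≤ gam j) ∧ (∑ j, gam j = 1) ∧
          f t' (∑ j, lam j • xs j) (∑ j, gam j • us j) = ∑ j, lam j • f t' (xs j) (us j))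
    -- closed-loop trajectory and inputs:
    (x : ℕ → Fin n → ℝ) (u : ℕ → Fin d → ℝ)
    -- Assumption 2: feasible `P`-periodic initial trajectory on `0, …, P`:
    (hdyn0 : ∀ k, k < P → x (k + 1) = f k (x k) (u k))
    (hxcon0 : ∀ k, k ≤ P → x k ∈ X k)
    (hucon0 : ∀ k, k < P → u k ∈ U k)
    (hper : x P = x 0)
    -- for `t ≥ P` the closed loop applies the first input of some feasible plan:
    (hsel : ∀ t, P ≤ t →
      (∃ xb ub lam, FeasPlan P N f X U x t xb ub lam) →
      ∃ xb ub lam, FeasPlan P N f X U x t xb ub lam ∧ u t = ub t)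
    (hcl : ∀ t, P ≤ t → x (t + 1) = f t (x t) (u t)) :
    (∀ t, P ≤ t → ∃ xb ub lam, FeasPlan P N f X U x t xb ub lam) ∧
    (∀ t, x t ∈ X t) ∧ (∀ t, u t ∈ U t) := by
  have hdyn (k : ℕ) : x (k + 1) = f k (x k) (u k) := (lt_or_ge k P).elim (hdyn0 k) (hcl k)
  have hfeasible : ∀ t, P ≤ t → (∃ xb ub lam, FeasPlan P N f X U x t xb ub lam) ∧
      ∀ k < t, x k ∈ X k ∧ u k ∈ U k := by
    intro t ht
    induction t, ht using Nat.le_induction with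
    | base => exact ⟨⟨_, _, _, feasPlan_initial hNP hf hXper hUper hdyn0 hxcon0 hucon0 hper⟩,
        fun k hk => ⟨hxcon0 k hk.le, hucon0 k hk⟩⟩
    | succ s hs ih =>
      obtain ⟨xb, ub, lam, hp, hus⟩ := hsel s hs ih.1
      have hhist (k : ℕ) (hk : k ≤ s) : x k ∈ X k ∧ u k ∈ U k :=
        hk.lt_or_eq.elim (ih.2 k) fun h => h ▸ hp.mem_of_input_eq hN hus
      exact ⟨hp.exists_succ hN hNP hf hXper hUper (hX _) (hU _) hA3 (fun k _ => hdyn k) hhist hus,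
        fun k hk => hhist k (Nat.lt_succ_iff.mp hk)⟩
  have hmem (t : ℕ) : x t ∈ X t ∧ u t ∈ U t :=
    (hfeasible (max P (t + 1)) (le_max_left _ _)).2 t (by omega)
  exact ⟨fun t ht => (hfeasible t ht).1, fun t => (hmem t).1, fun t => (hmem t).2⟩
end

section
/- Cost-decrease inequality for the candidate plan: suppose the closed-loop history satisfies x_{k+1} = f_k(x_k, u_k) for k ≤ t, the stage costs h_k : ℝ^n × ℝ^d → ℝ are jointly convex and P-periodic (h_{k+P} = h_k), and a feasible plan at time t is given with states x̄_t, …, x̄_{t+N}, inputs ū_t, …, ū_{t+N−1}, multipliers λ_1, …, λ_M ≥ 0, Σ_{j=1}^M λ_j = 1, where x̄_t = x_t and the applied closed-loop input equals the plan's first input, u_t = ū_t. Then Σ_{k=t}^{t+N−1} h_k(x̄_k, ū_k) + Σ_{j=1}^M λ_j J_t(x_{t+N−jP}) ≥ Σ_{k=t+1}^{t+N−1} h_k(x̄_k, ū_k) + h_{t+N}(Σ_{j=1}^M λ_j x_{t+N−jP}, Σ_{j=1}^M λ_j u_{t+N−jP}) + Σ_{j=1}^M λ_j J_{t+1}(x_{t+N−jP+1}).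 -/
/-!
Since `x̄ t = x t` and `ū t = u t`, the first stage cost of the plan is the closed-loop cost
`h t (x t) (u t)`. Adding it to each return-cost `J t (i_j)`, with `i_j = t + N - jP < t`, and
peeling off the first term instead gives `h (i_j) (x i_j, u i_j) + J (t+1) (i_j + 1)`; by
periodicity `h (i_j) = h (t + N)`. Averaging with the weights `λ_j` and applying Jensen's
inequality to the convex `h (t + N)` yields the claim.
-/

open Finset

theorem Finset.sum_Ico_add_eq_add_sum_Ico_succ {M : Type*} [AddCommMonoid M] (g : ℕ → M)
    {i t : ℕ} (hit : i ≤ t) :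
    ∑ k ∈ Ico i t, g k + g t = g i + ∑ k ∈ Ico (i + 1) (t + 1), g k := by
  rw [← sum_Ico_succ_top hit, sum_eq_sum_Ico_succ_bot (Nat.lt_succ_of_le hit)]

theorem ConvexOn.map_sum_prod_le {𝕜 E F ι : Type*} [Field 𝕜] [LinearOrder 𝕜]
    [IsStrictOrderedRing 𝕜] [AddCommGroup E] [Module 𝕜 E] [AddCommGroup F] [Module 𝕜 F]
    {g : E → F → 𝕜} (hg : ConvexOn 𝕜 Set.univ fun p : E × F => g p.1 p.2)
    {s : Finset ι} {w : ι → 𝕜} (hw₀ : ∀ i ∈ s, 0 ≤ w i) (hw₁ : ∑ i ∈ s, w i = 1)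
    (x : ι → E) (y : ι → F) :
    g (∑ i ∈ s, w i • x i) (∑ i ∈ s, w i • y i) ≤ ∑ i ∈ s, w i * g (x i) (y i) := by
  have hjensen := hg.map_sum_le (p := fun i => (x i, y i)) hw₀ hw₁ fun i _ => Set.mem_univ _
  simpa [Prod.fst_sum, Prod.snd_sum] using hjensen

theorem Nat.sub_succ_mul_lt_of_lt_div {t N P j : ℕ} (hNP : N < P) (hj : j < t / P) :
    t + N - (j + 1) * P < t ∧ t + N - (j + 1) * P + (j + 1) * P = t + N := by
  have hle : (j + 1) * P ≤ t := Nat.mul_le_of_le_div P (j + 1) t hj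
  have hP : P ≤ (j + 1) * P := Nat.le_mul_of_pos_left P j.succ_pos
  omega

theorem cost_decrease_candidate_plan_general {n d : ℕ} (P N : ℕ) (hN : 1 ≤ N) (hNP : N < P)
    (h : ℕ → (Fin n → ℝ) → (Fin d → ℝ) → ℝ)
    (hconv : ∀ k, ConvexOn ℝ Set.univ
      (fun p : (Fin n → ℝ) × (Fin d → ℝ) => h k p.1 p.2))
    (hper : ∀ k, h (k + P) = h k)
    (x : ℕ → Fin n → ℝ) (u : ℕ → Fin d → ℝ) (t : ℕ)
    (xbar : ℕ → Fin n → ℝ) (ubar : ℕ → Fin d → ℝ) (lam : Fin (t / P) → ℝ)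
    (hlam : ∀ j, 0 ≤ lam j) (hlamsum : ∑ j, lam j = 1)
    (hinit : xbar t = x t)
    (happl : u t = ubar t)
    (J : ℕ → ℕ → ℝ)
    (hJ : ∀ s i, J s i = ∑ k ∈ Finset.Ico i s, h k (x k) (u k)) :
    (∑ k ∈ Finset.Ico t (t + N), h k (xbar k) (ubar k))
        + ∑ j : Fin (t / P), lam j * J t (t + N - (j.1 + 1) * P)
      ≥ (∑ k ∈ Finset.Ico (t + 1) (t + N), h k (xbar k) (ubar k))
        + h (t + N) (∑ j : Fin (t / P), lam j • x (t + N - (j.1 + 1) * P))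
            (∑ j : Fin (t / P), lam j • u (t + N - (j.1 + 1) * P))
        + ∑ j : Fin (t / P), lam j * J (t + 1) (t + N - (j.1 + 1) * P + 1) := by
  set i : Fin (t / P) → ℕ := fun j => t + N - (j.1 + 1) * P
  have hJstep : ∀ j, J t (i j) + h t (x t) (u t)
      = h (t + N) (x (i j)) (u (i j)) + J (t + 1) (i j + 1) := fun j => by
    obtain ⟨hit, hshift⟩ := Nat.sub_succ_mul_lt_of_lt_div hNP j.2
    have hperiod : h (i j + (j.1 + 1) * P) = h (i j) := Function.Periodic.nat_mul hper _ _
    rw [hJ, hJ, sum_Ico_add_eq_add_sum_Ico_succ _ hit.le, ← hperiod, hshift]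
  have hweighted : ∑ j, lam j * J t (i j) + h t (x t) (u t)
      = ∑ j, lam j * h (t + N) (x (i j)) (u (i j)) + ∑ j, lam j * J (t + 1) (i j + 1) := by
    calc ∑ j, lam j * J t (i j) + h t (x t) (u t)
        = ∑ j, lam j * (J t (i j) + h t (x t) (u t)) := by
          simp only [mul_add, sum_add_distrib, ← sum_mul, hlamsum, one_mul]
      _ = _ := by simp only [hJstep, mul_add, sum_add_distrib]
  have hjensen := (hconv (t + N)).map_sum_prod_le (fun j _ => hlam j) hlamsum
    (fun j => x (i j)) (fun j => u (i j))
  rw [sum_eq_sum_Ico_succ_bot (by omega), hinit, ← happl]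
  linarith

/-- **Cost-decrease inequality for the candidate plan.**
Suppose the closed-loop history satisfies the dynamics up to time `t`, the stage costs
`h k` are jointly convex and `P`-periodic, and a feasible plan at time `t` is given
(states `x̄`, inputs `ū`, multipliers `λ_j ≥ 0` summing to one, with `x̄ t = x t` and
`u t = ū t`).  With the return-cost `J t i = ∑_{k=i}^{t-1} h k (x k) (u k)`, the plan
cost at time `t` dominates the cost of the shifted candidate plan at time `t + 1`:
`∑_{k=t}^{t+N-1} h k (x̄ k) (ū k) + ∑_j λ_j J t (t+N-jP)
  ≥ ∑_{k=t+1}^{t+N-1} h k (x̄ k) (ū k)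
    + h (t+N) (∑_j λ_j x (t+N-jP), ∑_j λ_j u (t+N-jP))
    + ∑_j λ_j J (t+1) (t+N-jP+1)`. -/
theorem cost_decrease_candidate_plan {n d : ℕ} (P N : ℕ) (hN : 1 ≤ N) (hNP : N < P)
    (f : ℕ → (Fin n → ℝ) → (Fin d → ℝ) → (Fin n → ℝ))
    (h : ℕ → (Fin n → ℝ) → (Fin d → ℝ) → ℝ)
    (hconv : ∀ k, ConvexOn ℝ Set.univ
      (fun p : (Fin n → ℝ) × (Fin d → ℝ) => h k p.1 p.2))
    (hper : ∀ k, h (k + P) = h k)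
    (x : ℕ → Fin n → ℝ) (u : ℕ → Fin d → ℝ) (t : ℕ)
    (hhist : ∀ k, k ≤ t → x (k + 1) = f k (x k) (u k))
    (hM : 1 ≤ t / P)
    (xbar : ℕ → Fin n → ℝ) (ubar : ℕ → Fin d → ℝ) (lam : Fin (t / P) → ℝ)
    (hlam : ∀ j, 0 ≤ lam j) (hlamsum : ∑ j, lam j = 1)
    (hinit : xbar t = x t)
    (hpdyn : ∀ k, t ≤ k → k < t + N → xbar (k + 1) = f k (xbar k) (ubar k))
    (hterm : xbar (t + N) = ∑ j : Fin (t / P), lam j • x (t + N - (j.1 + 1) * P))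
    (happl : u t = ubar t)
    (J : ℕ → ℕ → ℝ)
    (hJ : ∀ s i, J s i = ∑ k ∈ Finset.Ico i s, h k (x k) (u k)) :
    (∑ k ∈ Finset.Ico t (t + N), h k (xbar k) (ubar k))
        + ∑ j : Fin (t / P), lam j * J t (t + N - (j.1 + 1) * P)
      ≥ (∑ k ∈ Finset.Ico (t + 1) (t + N), h k (xbar k) (ubar k))
        + h (t + N) (∑ j : Fin (t / P), lam j • x (t + N - (j.1 + 1) * P))
            (∑ j : Fin (t / P), lam j • u (t + N - (j.1 + 1) * P))
        + ∑ j : Fin (t / P), lam j * J (t + 1) (t + N - (j.1 + 1) * P + 1) :=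
  cost_decrease_candidate_plan_general P N hN hNP h hconv hper x u t xbar ubar lam hlam hlamsum
    hinit happl J hJ
end

section
/- Non-increasing cost for linear time-varying systems (Theorem 2): consider the P-periodic linear time-varying system x_{t+1} = A_t x_t + B_t u_t under Assumptions 1–2, in closed loop with the LMPC that at each time t ≥ P applies the first input of an optimal plan. Suppose that at times t and t+1 optimal plans exist (the minimum of the plan cost over all feasible plans is attained). Then the optimal values satisfy J^LMPC_{t→t+N}(x_t) ≥ J^LMPC_{t+1→t+1+N}(x_{t+1}) for all t ≥ P. -/
open Matrix

/-- A feasible plan at time `t` for the LMPC problem with the linear time-varying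
dynamics `x (k+1) = A k *ᵥ x k + B k *ᵥ u k`: it starts at the current state `x t`,
satisfies the dynamics and the state and input constraints over the horizon `N`, and
its terminal state is the convex combination `∑_j λ_j x (t+N-jP)` (with `j = 1, …, M`,
`M = ⌊t/P⌋`) of states in the sampled safe set. -/
def FeasPlanLTV {n d : ℕ} (P N : ℕ)
    (A : ℕ → Matrix (Fin n) (Fin n) ℝ) (B : ℕ → Matrix (Fin n) (Fin d) ℝ)
    (X : ℕ → Set (Fin n → ℝ)) (U : ℕ → Set (Fin d → ℝ))
    (x : ℕ → Fin n → ℝ) (t : ℕ)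
    (xb : ℕ → Fin n → ℝ) (ub : ℕ → Fin d → ℝ) (lam : Fin (t / P) → ℝ) : Prop :=
  (∀ j, 0 ≤ lam j) ∧ (∑ j, lam j = 1) ∧
  xb t = x t ∧
  (∀ k, t ≤ k → k < t + N → xb (k + 1) = A k *ᵥ xb k + B k *ᵥ ub k) ∧
  (∀ k, t ≤ k → k < t + N → xb k ∈ X k ∧ ub k ∈ U k) ∧
  xb (t + N) = ∑ j : Fin (t / P), lam j • x (t + N - (j.1 + 1) * P)

/-- The cost of a plan at time `t`: the sum of the stage costs over the horizon plus
the `Q`-function value `∑_j λ_j J_t(x (t+N-jP))`, where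
`J t i = ∑_{k=i}^{t-1} h k (x k) (u k)` is the return-cost. -/
def PlanCost {n d : ℕ} (P N : ℕ)
    (h : ℕ → (Fin n → ℝ) → (Fin d → ℝ) → ℝ)
    (x : ℕ → Fin n → ℝ) (u : ℕ → Fin d → ℝ) (t : ℕ)
    (xb : ℕ → Fin n → ℝ) (ub : ℕ → Fin d → ℝ) (lam : Fin (t / P) → ℝ) : ℝ :=
  (∑ k ∈ Finset.Ico t (t + N), h k (xb k) (ub k))
    + ∑ j : Fin (t / P), lam j *
        ∑ k ∈ Finset.Ico (t + N - (j.1 + 1) * P) t, h k (x k) (u k)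

/-!
The optimal plan at time `t` is shifted by one step: its first stage, which the closed loop has
just applied, is dropped, and one stage is appended that moves the terminal convex combination
`∑ⱼ λⱼ x(t+N-jP)` forward along the stored trajectories to `∑ⱼ λⱼ x(t+N+1-jP)`, with input
`∑ⱼ λⱼ u(t+N-jP)`. Periodicity and linearity of the dynamics and convexity of the constraints
make this a feasible plan at `t+1` with the same weights. Since `J_{t+1}(x_{s+1}) = J_t(x_s) - h_s + h_t`
and `∑ⱼ λⱼ = 1`, its cost exceeds the optimal cost at `t` by
`h_{t+N}(∑ⱼ λⱼ (x, u)(t+N-jP)) - ∑ⱼ λⱼ h_{t+N-jP}((x, u)(t+N-jP))`, which is `≤ 0` by Jensen's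
inequality and periodicity of `h`.
-/

open Finset Function

theorem Function.Periodic.tsub_nat_mul_eq {α : Type*} {f : ℕ → α} {P : ℕ}
    (hf : Periodic f P) {m a : ℕ} (hma : m * P ≤ a) : f (a - m * P) = f a := by
  have h := hf.nat_mul m (a - m * P)
  rwa [Nat.cast_id, Nat.sub_add_cancel hma, eq_comm] at h

theorem Finset.sum_Ico_add_one_add_one {M : Type*} [AddCommGroup M] (f : ℕ → M) {a b : ℕ}
    (hab : a ≤ b) : ∑ k ∈ Ico (a + 1) (b + 1), f k = ∑ k ∈ Ico a b, f k - f a + f b := by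
  have h := sum_Ico_succ_top hab f
  rw [sum_eq_sum_Ico_succ_bot (Nat.lt_succ_of_le hab)] at h
  rw [sub_add_eq_add_sub, eq_sub_iff_add_eq', h]

theorem Nat.div_mul_le_add (t P N : ℕ) : t / P * P ≤ t + N :=
  (Nat.div_mul_le_self t P).trans (Nat.le_add_right t N)

section Weights

variable {V : Type*} [AddCommMonoid V] [Module ℝ V] {M M' : ℕ}

noncomputable def padWeights (hM : M ≤ M') (w : Fin M → ℝ) : Fin M' → ℝ :=
  extend (Fin.castLE hM) w 0

theorem padWeights_nonneg (hM : M ≤ M') {w : Fin M → ℝ} (hw : ∀ j, 0 ≤ w j) (j : Fin M') :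
    0 ≤ padWeights hM w j := by
  by_cases hj : ∃ i, Fin.castLE hM i = j
  · obtain ⟨i, rfl⟩ := hj
    rw [padWeights, (Fin.castLE_injective hM).extend_apply]
    exact hw i
  · rw [padWeights, extend_apply' _ _ _ hj]
    rfl

theorem sum_padWeights_smul (hM : M ≤ M') (w : Fin M → ℝ) (g : ℕ → V) :
    ∑ j : Fin M', padWeights hM w j • g j = ∑ j : Fin M, w j • g j := by
  refine (Fintype.sum_of_injective _ (Fin.castLE_injective hM) _ _ (fun j hj => ?_)
    (fun i => ?_)).symm
  · rw [padWeights, extend_apply' _ _ _ hj, Pi.zero_apply, zero_smul]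
  · rw [padWeights, (Fin.castLE_injective hM).extend_apply, Fin.val_castLE]

theorem sum_padWeights (hM : M ≤ M') (w : Fin M → ℝ) :
    ∑ j, padWeights hM w j = ∑ j, w j := by
  simpa using sum_padWeights_smul hM w (fun _ => (1 : ℝ))

end Weights

section SafeSet

variable {V : Type*} [AddCommGroup V] [Module ℝ V] {M P : ℕ}

/-- The paper's `∑_{j=1}^M λ_j x_{k-jP}`, indexed from `j = 0`; the terminal constraint of
`FeasPlanLTV` is `xb (t + N) = safeSetComb P lam x (t + N)`. -/
def safeSetComb (P : ℕ) (w : Fin M → ℝ) (traj : ℕ → V) (k : ℕ) : V :=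
  ∑ j, w j • traj (k - (j.1 + 1) * P)

theorem succ_mul_le_of_mul_le {k : ℕ} (j : Fin M) (hk : M * P ≤ k) : (j.1 + 1) * P ≤ k :=
  (Nat.mul_le_mul_right P j.2).trans hk

theorem safeSetComb_padWeights {M' : ℕ} (hM : M ≤ M') (w : Fin M → ℝ) (traj : ℕ → V) (k : ℕ) :
    safeSetComb P (padWeights hM w) traj k = safeSetComb P w traj k :=
  sum_padWeights_smul hM w (fun j => traj (k - (j + 1) * P))

theorem safeSetComb_mem {S : ℕ → Set V} (hS : ∀ k, Convex ℝ (S k)) (hSper : Periodic S P)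
    {traj : ℕ → V} (htraj : ∀ k, traj k ∈ S k) {w : Fin M → ℝ} (hw₀ : ∀ j, 0 ≤ w j)
    (hw₁ : ∑ j, w j = 1) {k : ℕ} (hk : M * P ≤ k) : safeSetComb P w traj k ∈ S k :=
  (hS k).sum_mem (fun j _ => hw₀ j) hw₁ fun j _ => by
    rw [← hSper.tsub_nat_mul_eq (succ_mul_le_of_mul_le j hk)]
    exact htraj _

end SafeSet

theorem mulVec_safeSetComb_add_mulVec {n d M P : ℕ} {A : ℕ → Matrix (Fin n) (Fin n) ℝ}
    {B : ℕ → Matrix (Fin n) (Fin d) ℝ} (hA : Periodic A P) (hB : Periodic B P)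
    {x : ℕ → Fin n → ℝ} {u : ℕ → Fin d → ℝ}
    (hdyn : ∀ k, x (k + 1) = A k *ᵥ x k + B k *ᵥ u k) (w : Fin M → ℝ) {k : ℕ}
    (hk : M * P ≤ k) :
    A k *ᵥ safeSetComb P w x k + B k *ᵥ safeSetComb P w u k = safeSetComb P w x (k + 1) := by
  simp only [safeSetComb, mulVec_sum, mulVec_smul, ← sum_add_distrib, ← smul_add]
  refine sum_congr rfl fun j _ => ?_
  have hj := succ_mul_le_of_mul_le j hk
  rw [← hA.tsub_nat_mul_eq hj, ← hB.tsub_nat_mul_eq hj, ← hdyn, Nat.sub_add_comm hj]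

section Cost

variable {E F : Type*} {M P : ℕ} {h : ℕ → E → F → ℝ} {x : ℕ → E} {u : ℕ → F} {w : Fin M → ℝ}

theorem stageCost_safeSetComb_le [AddCommGroup E] [Module ℝ E] [AddCommGroup F] [Module ℝ F]
    (hh : Periodic h P) {k : ℕ}
    (hconv : ConvexOn ℝ Set.univ (fun p : E × F => h k p.1 p.2)) (hw₀ : ∀ j, 0 ≤ w j)
    (hw₁ : ∑ j, w j = 1) (hk : M * P ≤ k) :
    h k (safeSetComb P w x k) (safeSetComb P w u k) ≤
      safeSetComb P w (fun s => h s (x s) (u s)) k := by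
  have hJensen := hconv.map_sum_le (t := univ)
    (p := fun j : Fin M => (x (k - (j.1 + 1) * P), u (k - (j.1 + 1) * P)))
    (fun j _ => hw₀ j) hw₁ (fun _ _ => Set.mem_univ _)
  simp only [Prod.fst_sum, Prod.snd_sum, Prod.smul_fst, Prod.smul_snd] at hJensen
  refine hJensen.trans_eq (sum_congr rfl fun j _ => ?_)
  dsimp only
  rw [hh.tsub_nat_mul_eq (succ_mul_le_of_mul_le j hk)]

variable (h x u) in
def returnCost (t s : ℕ) : ℝ :=
  ∑ k ∈ Ico s t, h k (x k) (u k)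

theorem returnCost_succ_succ {s t : ℕ} (hst : s ≤ t) :
    returnCost h x u (t + 1) (s + 1) =
      returnCost h x u t s - h s (x s) (u s) + h t (x t) (u t) :=
  sum_Ico_add_one_add_one _ hst

theorem safeSetComb_returnCost_succ (hw₁ : ∑ j, w j = 1) {k t : ℕ} (hk : M * P ≤ k)
    (hkt : k ≤ t + P) :
    safeSetComb P w (returnCost h x u (t + 1)) (k + 1) =
      safeSetComb P w (returnCost h x u t) k - safeSetComb P w (fun s => h s (x s) (u s)) k +
        h t (x t) (u t) := by
  have hstep : ∀ j : Fin M, returnCost h x u (t + 1) (k + 1 - (j.1 + 1) * P) =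
      returnCost h x u t (k - (j.1 + 1) * P) -
        h (k - (j.1 + 1) * P) (x (k - (j.1 + 1) * P)) (u (k - (j.1 + 1) * P)) +
        h t (x t) (u t) := fun j => by
    have hj := succ_mul_le_of_mul_le j hk
    have hP : P ≤ (j.1 + 1) * P := Nat.le_mul_of_pos_left P j.1.succ_pos
    rw [Nat.sub_add_comm hj]
    exact returnCost_succ_succ (by omega)
  simp only [safeSetComb, hstep, smul_eq_mul, mul_add, mul_sub, sum_add_distrib, sum_sub_distrib,
    ← sum_mul, hw₁, one_mul]

end Cost

section Plan

variable {n d P N t : ℕ} {A : ℕ → Matrix (Fin n) (Fin n) ℝ} {B : ℕ → Matrix (Fin n) (Fin d) ℝ}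
  {X : ℕ → Set (Fin n → ℝ)} {U : ℕ → Set (Fin d → ℝ)} {x : ℕ → Fin n → ℝ} {u : ℕ → Fin d → ℝ}
  {xb : ℕ → Fin n → ℝ} {ub : ℕ → Fin d → ℝ} {lam : Fin (t / P) → ℝ}

theorem FeasPlanLTV.state_input_mem (hN : 1 ≤ N) (hp : FeasPlanLTV P N A B X U x t xb ub lam)
    (hu : u t = ub t) : x t ∈ X t ∧ u t ∈ U t := by
  obtain ⟨-, -, hinit, -, hcon, -⟩ := hp
  rw [← hinit, hu]
  exact hcon t le_rfl (by omega)

theorem FeasPlanLTV.shift (hN : 1 ≤ N) (hA : Periodic A P) (hB : Periodic B P)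
    (hX : ∀ k, Convex ℝ (X k)) (hXper : Periodic X P)
    (hU : ∀ k, Convex ℝ (U k)) (hUper : Periodic U P)
    (hdyn : ∀ k, x (k + 1) = A k *ᵥ x k + B k *ᵥ u k) (hmem : ∀ k, x k ∈ X k ∧ u k ∈ U k)
    (hp : FeasPlanLTV P N A B X U x t xb ub lam) (hu : u t = ub t) :
    FeasPlanLTV P N A B X U x (t + 1)
      (update xb (t + 1 + N) (safeSetComb P lam x (t + 1 + N)))
      (update ub (t + N) (safeSetComb P lam u (t + N)))
      (padWeights (Nat.div_le_div_right t.le_succ) lam) := by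
  obtain ⟨hlam₀, hlam₁, hinit, hdynb, hcon, hterm⟩ := hp
  have hk := Nat.div_mul_le_add t P N
  refine ⟨padWeights_nonneg _ hlam₀, (sum_padWeights _ lam).trans hlam₁, ?_,
    fun k hk₁ hk₂ => ?_, fun k hk₁ hk₂ => ?_, ?_⟩
  · rw [update_of_ne (by omega), hdynb t le_rfl (by omega), hinit, ← hu, hdyn]
  · rcases (show k < t + N ∨ k = t + N by omega) with hk' | rfl
    · rw [update_of_ne (by omega), update_of_ne (by omega), update_of_ne (by omega)]
      exact hdynb k (by omega) hk'
    · rw [show t + N + 1 = t + 1 + N by omega, update_self, update_of_ne (by omega), update_self,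
        hterm, add_right_comm t 1 N]
      exact (mulVec_safeSetComb_add_mulVec hA hB hdyn lam hk).symm
  · rcases (show k < t + N ∨ k = t + N by omega) with hk' | rfl
    · rw [update_of_ne (by omega), update_of_ne (by omega)]
      exact hcon k (by omega) hk'
    · rw [update_of_ne (by omega), update_self, hterm]
      exact ⟨safeSetComb_mem hX hXper (fun k => (hmem k).1) hlam₀ hlam₁ hk,
        safeSetComb_mem hU hUper (fun k => (hmem k).2) hlam₀ hlam₁ hk⟩
  · rw [update_self]
    exact (safeSetComb_padWeights _ lam x _).symm

theorem planCost_eq_add_safeSetComb (h : ℕ → (Fin n → ℝ) → (Fin d → ℝ) → ℝ) :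
    PlanCost P N h x u t xb ub lam =
      ∑ k ∈ Ico t (t + N), h k (xb k) (ub k) + safeSetComb P lam (returnCost h x u t) (t + N) :=
  rfl

theorem planCost_shift_le {h : ℕ → (Fin n → ℝ) → (Fin d → ℝ) → ℝ} (hN : 1 ≤ N) (hNP : N ≤ P)
    (hh : Periodic h P)
    (hconv : ∀ k, ConvexOn ℝ Set.univ (fun p : (Fin n → ℝ) × (Fin d → ℝ) => h k p.1 p.2))
    (hp : FeasPlanLTV P N A B X U x t xb ub lam) (hu : u t = ub t) :
    PlanCost P N h x u (t + 1)
        (update xb (t + 1 + N) (safeSetComb P lam x (t + 1 + N)))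
        (update ub (t + N) (safeSetComb P lam u (t + N)))
        (padWeights (Nat.div_le_div_right t.le_succ) lam) ≤
      PlanCost P N h x u t xb ub lam := by
  obtain ⟨hlam₀, hlam₁, hinit, -, -, hterm⟩ := hp
  have hk := Nat.div_mul_le_add t P N
  have hstage : ∑ k ∈ Ico (t + 1) (t + 1 + N), h k
        (update xb (t + 1 + N) (safeSetComb P lam x (t + 1 + N)) k)
        (update ub (t + N) (safeSetComb P lam u (t + N)) k) =
      ∑ k ∈ Ico t (t + N), h k (xb k) (ub k) - h t (x t) (u t) +
        h (t + N) (xb (t + N)) (safeSetComb P lam u (t + N)) := by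
    rw [add_right_comm, sum_Ico_add_one_add_one _ (Nat.le_add_right t N),
      update_of_ne (by omega), update_of_ne (by omega), update_of_ne (by omega), update_self,
      ← hinit, ← hu]
    congr 2
    refine sum_congr rfl fun k hkmem => ?_
    rw [mem_Ico] at hkmem
    rw [update_of_ne (by omega), update_of_ne (by omega)]
  have hJensen : h (t + N) (xb (t + N)) (safeSetComb P lam u (t + N)) ≤
      safeSetComb P lam (fun s => h s (x s) (u s)) (t + N) := by
    rw [hterm]
    exact stageCost_safeSetComb_le hh (hconv _) hlam₀ hlam₁ hk
  have hQ := safeSetComb_returnCost_succ (h := h) (x := x) (u := u) hlam₁ hk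
    (show t + N ≤ t + P by omega)
  rw [planCost_eq_add_safeSetComb, planCost_eq_add_safeSetComb, hstage, safeSetComb_padWeights,
    add_right_comm t 1 N, hQ]
  linarith

end Plan

theorem lmpc_nonincreasing_cost_ltv_general {n d : ℕ} (P N : ℕ) (hN : 1 ≤ N) (hNP : N < P)
    (A : ℕ → Matrix (Fin n) (Fin n) ℝ) (B : ℕ → Matrix (Fin n) (Fin d) ℝ)
    (hA : ∀ t, A (t + P) = A t) (hB : ∀ t, B (t + P) = B t)
    (X : ℕ → Set (Fin n → ℝ)) (U : ℕ → Set (Fin d → ℝ))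
    -- Assumption 1:
    (hX : ∀ t, Convex ℝ (X t)) (hXper : ∀ t, X (t + P) = X t)
    (hU : ∀ t, Convex ℝ (U t)) (hUper : ∀ t, U (t + P) = U t)
    (h : ℕ → (Fin n → ℝ) → (Fin d → ℝ) → ℝ)
    (hconv : ∀ k, ConvexOn ℝ Set.univ
      (fun p : (Fin n → ℝ) × (Fin d → ℝ) => h k p.1 p.2))
    (hhper : ∀ k, h (k + P) = h k)
    -- closed-loop trajectory and inputs:
    (x : ℕ → Fin n → ℝ) (u : ℕ → Fin d → ℝ)
    -- Assumption 2: feasible `P`-periodic initial trajectory on `0, …, P`: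
    (hdyn0 : ∀ k, k < P → x (k + 1) = A k *ᵥ x k + B k *ᵥ u k)
    (hxcon0 : ∀ k, k ≤ P → x k ∈ X k)
    (hucon0 : ∀ k, k < P → u k ∈ U k)
    -- the LMPC optimal value `vstar t` is attained for every `t ≥ P`:
    (vstar : ℕ → ℝ)
    (hopt : ∀ t, P ≤ t → IsLeast
      {c : ℝ | ∃ xb ub lam, FeasPlanLTV P N A B X U x t xb ub lam ∧
        PlanCost P N h x u t xb ub lam = c} (vstar t))
    -- the closed loop applies the first input of an optimal plan:
    (hsel : ∀ t, P ≤ t → ∃ xb ub lam,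
      FeasPlanLTV P N A B X U x t xb ub lam ∧
      PlanCost P N h x u t xb ub lam = vstar t ∧ u t = ub t)
    (hcl : ∀ t, P ≤ t → x (t + 1) = A t *ᵥ x t + B t *ᵥ u t) :
    ∀ t, P ≤ t → vstar t ≥ vstar (t + 1) := by
  have hdyn : ∀ k, x (k + 1) = A k *ᵥ x k + B k *ᵥ u k := fun k =>
    (lt_or_ge k P).elim (hdyn0 k) (hcl k)
  have hmem : ∀ k, x k ∈ X k ∧ u k ∈ U k := fun k => by
    rcases lt_or_ge k P with hk | hk
    · exact ⟨hxcon0 k hk.le, hucon0 k hk⟩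
    · obtain ⟨xb, ub, lam, hp, -, hu⟩ := hsel k hk
      exact hp.state_input_mem hN hu
  intro t ht
  obtain ⟨xb, ub, lam, hp, hcost, hu⟩ := hsel t ht
  calc vstar (t + 1)
      ≤ PlanCost P N h x u (t + 1) _ _ _ := (hopt (t + 1) (by omega)).2
        ⟨_, _, _, hp.shift hN hA hB hX hXper hU hUper hdyn hmem hu, rfl⟩
    _ ≤ vstar t := hcost ▸ planCost_shift_le hN hNP.le hhper hconv hp hu

/-- **Non-increasing cost for linear time-varying systems (Theorem 2).**
Consider the `P`-periodic LTV system under Assumptions 1–2 in closed loop with the LMPC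
that at each time `t ≥ P` applies the first input of an optimal plan, where the optimal
value `J^LMPC = vstar t` is attained.  Then
`J^LMPC_{t→t+N}(x t) ≥ J^LMPC_{t+1→t+1+N}(x (t+1))` for all `t ≥ P`. -/
theorem lmpc_nonincreasing_cost_ltv {n d : ℕ} (P N : ℕ) (hN : 1 ≤ N) (hNP : N < P)
    (A : ℕ → Matrix (Fin n) (Fin n) ℝ) (B : ℕ → Matrix (Fin n) (Fin d) ℝ)
    (hA : ∀ t, A (t + P) = A t) (hB : ∀ t, B (t + P) = B t)
    (X : ℕ → Set (Fin n → ℝ)) (U : ℕ → Set (Fin d → ℝ))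
    -- Assumption 1:
    (hX : ∀ t, Convex ℝ (X t)) (hXper : ∀ t, X (t + P) = X t)
    (hU : ∀ t, Convex ℝ (U t)) (hUper : ∀ t, U (t + P) = U t)
    (h : ℕ → (Fin n → ℝ) → (Fin d → ℝ) → ℝ)
    (hconv : ∀ k, ConvexOn ℝ Set.univ
      (fun p : (Fin n → ℝ) × (Fin d → ℝ) => h k p.1 p.2))
    (hhper : ∀ k, h (k + P) = h k)
    -- closed-loop trajectory and inputs:
    (x : ℕ → Fin n → ℝ) (u : ℕ → Fin d → ℝ)
    -- Assumption 2: feasible `P`-periodic initial trajectory on `0, …, P`: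
    (hdyn0 : ∀ k, k < P → x (k + 1) = A k *ᵥ x k + B k *ᵥ u k)
    (hxcon0 : ∀ k, k ≤ P → x k ∈ X k)
    (hucon0 : ∀ k, k < P → u k ∈ U k)
    (hper0 : x P = x 0)
    -- the LMPC optimal value `vstar t` is attained for every `t ≥ P`:
    (vstar : ℕ → ℝ)
    (hopt : ∀ t, P ≤ t → IsLeast
      {c : ℝ | ∃ xb ub lam, FeasPlanLTV P N A B X U x t xb ub lam ∧
        PlanCost P N h x u t xb ub lam = c} (vstar t))
    -- the closed loop applies the first input of an optimal plan:
    (hsel : ∀ t, P ≤ t → ∃ xb ub lam,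
      FeasPlanLTV P N A B X U x t xb ub lam ∧
      PlanCost P N h x u t xb ub lam = vstar t ∧ u t = ub t)
    (hcl : ∀ t, P ≤ t → x (t + 1) = A t *ᵥ x t + B t *ᵥ u t) :
    ∀ t, P ≤ t → vstar t ≥ vstar (t + 1) :=
  lmpc_nonincreasing_cost_ltv_general P N hN hNP A B hA hB X U hX hXper hU hUper h hconv hhper x u
    hdyn0 hxcon0 hucon0 vstar hopt hsel hcl
end
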